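/- (Conditional decoupling lower bound, abstract form.) In the setting of the previous decomposition φ = φ̃ + h with independent copy ĥ and φ̂ = φ̃ + ĥ, for any increasing f₂ : ℝ^S → [0,1] depending only on coordinates in K₂, almost surely on G_δ: E[f₂(φ) | F] ≥ E[f₂(φ̂ − δ)] − P(Ĝ_δᶜ). -/

import Mathlib

open MeasureTheory ProbabilityTheory Set

/-!
By independence of `φ̃` and `𝓕` and the `𝓕`-measurability of `h`, the conditional expectation
of `f₂(φ̃ + h)` given `𝓕` is `F(h(ω))` with `F(b) = E[f₂(φ̃ + b)]` ("freezing" `h`). On `G_δ` and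
`Ĝ_δ` we have `φ̃ + ĥ - δ ≤ φ̃ + h(ω)` on `K₂`, so, `f₂` being increasing and depending only on
`K₂`, `f₂(φ̂ - δ) ≤ f₂(φ̃ + h(ω))` there; off `Ĝ_δ` the integrand is at most `1`.
-/

section Freezing

variable {Ω E F : Type*} {m m0 : MeasurableSpace Ω} {μ : Measure Ω} [IsFiniteMeasure μ]
  [MeasurableSpace E] [MeasurableSpace F] {X : Ω → E} {Y : Ω → F}

theorem map_prodMk_restrict_eq_prod_of_indep (hm : m ≤ m0) (hX : Measurable X)
    (hY : Measurable[m] Y) (hind : Indep (MeasurableSpace.comap X inferInstance) m μ)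
    {s : Set Ω} (hs : MeasurableSet[m] s) :
    (μ.restrict s).map (fun ω => (X ω, Y ω)) = (μ.map X).prod ((μ.restrict s).map Y) := by
  have hY0 : Measurable Y := hY.mono hm le_rfl
  refine (Measure.prod_eq fun A B hA hB => ?_).symm
  rw [Measure.map_apply (hX.prodMk hY0) (hA.prod hB), Measure.map_apply hX hA,
    Measure.map_apply hY0 hB, Measure.restrict_apply (hX.prodMk hY0 (hA.prod hB)),
    Measure.restrict_apply (hY0 hB), mk_preimage_prod, inter_assoc]
  exact (Indep_iff _ _ _).1 hind _ _ ⟨A, hA, rfl⟩ ((hY hB).inter hs)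

theorem condExp_comp_prodMk_ae_eq_integral_of_indep (hm : m ≤ m0) (hX : Measurable X)
    (hY : Measurable[m] Y) (hind : Indep (MeasurableSpace.comap X inferInstance) m μ)
    {Φ : E × F → ℝ} (hΦ : StronglyMeasurable Φ)
    (hΦint : Integrable Φ ((μ.map X).prod (μ.map Y))) :
    μ[fun ω => Φ (X ω, Y ω) | m] =ᵐ[μ] fun ω => ∫ ω', Φ (X ω', Y ω) ∂μ := by
  have hY0 : Measurable Y := hY.mono hm le_rfl
  have hXY : Measurable fun ω => (X ω, Y ω) := hX.prodMk hY0
  have hjoint : μ.map (fun ω => (X ω, Y ω)) = (μ.map X).prod (μ.map Y) := by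
    simpa using map_prodMk_restrict_eq_prod_of_indep hm hX hY hind MeasurableSet.univ
  have hlaw (s : Set Ω) : Integrable Φ ((μ.restrict s).map fun ω => (X ω, Y ω)) :=
    hΦint.mono_measure (hjoint ▸ Measure.map_mono Measure.restrict_le_self hXY)
  set G : F → ℝ := fun y => ∫ x, Φ (x, y) ∂(μ.map X)
  have hG : StronglyMeasurable G := hΦ.integral_prod_left'
  have hGY : (fun ω => ∫ ω', Φ (X ω', Y ω) ∂μ) = G ∘ Y := funext fun ω =>
    (integral_map hX.aemeasurable
      (hΦ.comp_measurable measurable_prodMk_right).aestronglyMeasurable).symm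
  rw [hGY]
  refine (ae_eq_condExp_of_forall_setIntegral_eq hm ?_ (fun s _ _ => ?_) (fun s hs _ => ?_)
    (hG.comp_measurable hY).aestronglyMeasurable).symm
  · exact (integrable_map_measure hΦ.aestronglyMeasurable hXY.aemeasurable).1 (hjoint ▸ hΦint)
  · exact ((integrable_map_measure hG.aestronglyMeasurable hY0.aemeasurable).1
      hΦint.integral_prod_right).integrableOn
  · have hprod := map_prodMk_restrict_eq_prod_of_indep hm hX hY hind hs
    calc ∫ ω in s, G (Y ω) ∂μ = ∫ y, G y ∂((μ.restrict s).map Y) :=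
          (integral_map hY0.aemeasurable hG.aestronglyMeasurable).symm
      _ = ∫ p, Φ p ∂((μ.restrict s).map fun ω => (X ω, Y ω)) := by
          rw [hprod, integral_prod_symm Φ (hprod ▸ hlaw s)]
      _ = ∫ ω in s, Φ (X ω, Y ω) ∂μ := integral_map hXY.aemeasurable hΦ.aestronglyMeasurable

end Freezing

theorem integral_sub_measureReal_compl_le {Ω : Type*} {_ : MeasurableSpace Ω} {μ : Measure Ω}
    [IsFiniteMeasure μ] {u v : Ω → ℝ} (hu : Integrable u μ) (hv : Integrable v μ)
    (hu1 : ∀ ω, u ω ≤ 1) (hv0 : ∀ ω, 0 ≤ v ω) {G : Set Ω} (hG : MeasurableSet G)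
    (huv : ∀ ω ∈ G, u ω ≤ v ω) :
    ∫ ω, u ω ∂μ - μ.real Gᶜ ≤ ∫ ω, v ω ∂μ := by
  have hcompl : ∫ ω in Gᶜ, u ω ∂μ ≤ μ.real Gᶜ := by
    simpa using setIntegral_mono hu.integrableOn (integrable_const (1 : ℝ)).integrableOn hu1
  have hgood : ∫ ω in G, u ω ∂μ ≤ ∫ ω in G, v ω ∂μ :=
    setIntegral_mono_on hu.integrableOn hv.integrableOn hG huv
  have hrestrict : ∫ ω in G, v ω ∂μ ≤ ∫ ω, v ω ∂μ :=
    setIntegral_le_integral hv (.of_forall hv0)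
  linarith [integral_add_compl hG hu]

theorem Monotone.apply_le_apply_of_le_on {S β γ : Type*} [Preorder β] [Preorder γ] {K : Set S}
    {f : (S → β) → γ} (hf : Monotone f) (hfK : ∀ η η', (∀ x ∈ K, η x = η' x) → f η = f η')
    {η η' : S → β} (h : ∀ x ∈ K, η x ≤ η' x) : f η ≤ f η' := by
  classical
  have hpiece : f η = f (K.piecewise η η') :=
    hfK _ _ fun x hx => (piecewise_eq_of_mem K η η' hx).symm
  refine hpiece ▸ hf fun x => ?_
  by_cases hx : x ∈ K
  · simpa [hx] using h x hx
  · simp [hx]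

theorem conditional_decoupling_lower_general
    {Ω : Type*} {m0 : MeasurableSpace Ω} (P : Measure Ω) [IsProbabilityMeasure P]
    {S : Type*} [Countable S] (K₂ : Set S)
    (φtil h hhat : Ω → S → ℝ)
    (hφtilm : Measurable φtil) (hhatm : Measurable hhat)
    (𝓕 : MeasurableSpace Ω) (hF : 𝓕 ≤ m0)
    -- h is 𝓕-measurable
    (hhF : Measurable[𝓕] h)
    -- φ̃ is independent of 𝓕
    (hind1 : Indep (MeasurableSpace.comap φtil inferInstance) 𝓕 P)
    (f₂ : (S → ℝ) → ℝ) (hf₂m : Measurable f₂) (hf₂mono : Monotone f₂)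
    (hf₂01 : ∀ η, f₂ η ∈ Icc (0:ℝ) 1)
    (hf₂supp : ∀ η η' : S → ℝ, (∀ x ∈ K₂, η x = η' x) → f₂ η = f₂ η')
    (δ : ℝ) :
    ∀ᵐ ω ∂P, (∀ x ∈ K₂, |h ω x| ≤ δ / 2) →
      (∫ ω', f₂ (fun x => φtil ω' x + hhat ω' x - δ) ∂P)
          - (P {ω' | ¬ ∀ x ∈ K₂, |hhat ω' x| ≤ δ / 2}).toReal
        ≤ (P[fun ω' => f₂ (fun x => φtil ω' x + h ω' x)|𝓕]) ω := by
  -- `𝓕` is also a `MeasurableSpace Ω` in context; measurability below refers to `m0`.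
  let _ : MeasurableSpace Ω := m0
  have hf₂int {Z : Ω → S → ℝ} (hZ : Measurable Z) : Integrable (fun ω => f₂ (Z ω)) P :=
    .of_mem_Icc 0 1 (hf₂m.comp hZ).aemeasurable (.of_forall fun _ => hf₂01 _)
  have hΦ : Measurable fun p : (S → ℝ) × (S → ℝ) => f₂ fun x => p.1 x + p.2 x :=
    hf₂m.comp (by fun_prop)
  have hcond := condExp_comp_prodMk_ae_eq_integral_of_indep hF hφtilm hhF hind1
    hΦ.stronglyMeasurable
    (.of_mem_Icc 0 1 hΦ.aemeasurable (.of_forall fun _ => hf₂01 _))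
  have hĜ : MeasurableSet {ω' | ∀ x ∈ K₂, |hhat ω' x| ≤ δ / 2} := by
    measurability
  filter_upwards [hcond] with ω hω hG
  rw [hω]
  refine integral_sub_measureReal_compl_le (hf₂int (by fun_prop)) (hf₂int (by fun_prop))
    (fun _ => (hf₂01 _).2) (fun _ => (hf₂01 _).1) hĜ fun ω' hĜω' =>
    hf₂mono.apply_le_apply_of_le_on hf₂supp fun x hx => ?_
  linarith [abs_le.1 (hĜω' x hx), abs_le.1 (hG x hx)]

theorem conditional_decoupling_lower
    {Ω : Type*} {m0 : MeasurableSpace Ω} (P : Measure Ω) [IsProbabilityMeasure P]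
    {S : Type*} [Countable S] (K₁ K₂ : Set S) (hK : Disjoint K₁ K₂)
    (φtil h hhat : Ω → S → ℝ)
    (hφtilm : Measurable φtil) (hhm : Measurable h) (hhatm : Measurable hhat)
    -- ĥ is a copy of h
    (hcopy : P.map hhat = P.map h)
    (𝓕 : MeasurableSpace Ω) (hF : 𝓕 ≤ m0)
    -- 𝓕 is the σ-algebra generated by φ restricted to K₁, where φ = φ̃ + h
    (hFdef : 𝓕 = MeasurableSpace.comap
      (fun ω => (fun x : K₁ => φtil ω x + h ω x)) inferInstance)
    -- h is 𝓕-measurable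
    (hhF : Measurable[𝓕] h)
    -- φ̃ is independent of 𝓕
    (hind1 : Indep (MeasurableSpace.comap φtil inferInstance) 𝓕 P)
    -- ĥ is independent of (φ̃, 𝓕)
    (hind2 : Indep (MeasurableSpace.comap hhat inferInstance)
      (𝓕 ⊔ MeasurableSpace.comap φtil inferInstance) P)
    (f₂ : (S → ℝ) → ℝ) (hf₂m : Measurable f₂) (hf₂mono : Monotone f₂)
    (hf₂01 : ∀ η, f₂ η ∈ Icc (0:ℝ) 1)
    (hf₂supp : ∀ η η' : S → ℝ, (∀ x ∈ K₂, η x = η' x) → f₂ η = f₂ η')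
    (δ : ℝ) (hδ : 0 < δ) :
    ∀ᵐ ω ∂P, (∀ x ∈ K₂, |h ω x| ≤ δ / 2) →
      (∫ ω', f₂ (fun x => φtil ω' x + hhat ω' x - δ) ∂P)
          - (P {ω' | ¬ ∀ x ∈ K₂, |hhat ω' x| ≤ δ / 2}).toReal
        ≤ (P[fun ω' => f₂ (fun x => φtil ω' x + h ω' x)|𝓕]) ω :=
  conditional_decoupling_lower_general P K₂ φtil h hhat hφtilm hhatm 𝓕 hF hhF hind1 f₂ hf₂m hf₂mono
    hf₂01 hf₂supp δ
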